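/- arXiv:1503.05439 — 4 statements merged into one kernel-verified Lean document; each statement's English description precedes it below -/
import Mathlib

section
/- Let n ∈ ℕ and let w ∈ Cⁿ(ℝ) be positive. Then there exist, for each k = 0,…,n, a finite index set Σ_{n,k} of tuples σ = (σ₁,…,σₙ) with σ_j ∈ {0,…,n−k}, and real constants C_σ for σ ∈ Σ_{n,k} (all independent of f, x and η), such that with P_{n,k}(s) := Σ_{σ∈Σ_{n,k}} C_σ ∏_{j=1}^n w^{(σ_j)}(s), the n-fold iterate of D_{w,x,η} satisfies for all f ∈ Cⁿ(ℝ), all s, x ∈ ℝ and all η ≠ 0: Dⁿ_{w,x,η}(f)(s) = (w(x)ⁿ/(2πiη)ⁿ) · w(s+x)^{−2n} · Σ_{k=0}^n f^{(k)}(s)·P_{n,k}(s+x). -/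
/-!
Write `c = w(x)/(2πiη)` and `W = w(· + x)`. If `Dᵐ f = cᵐ W⁻²ᵐ Σₖ f⁽ᵏ⁾ Q_{m,k}(· + x)`, then the
quotient rule applied to `(Σₖ f⁽ᵏ⁾ Q_{m,k}(· + x)) / W²ᵐ⁺¹` gives the same shape for `m + 1`, with
`Q_{m+1,k} = w (Q_{m,k-1} + Q_{m,k}') - (2m+1) w' Q_{m,k}` (this is `Dop.coeff`). By induction,
`Q_{m,k}` is a homogeneous polynomial of degree `m` in `w, w', …, w⁽ᵐ⁻ᵏ⁾`: multiplying by `w` or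
`w'` raises the degree by one, and differentiating a monomial raises the order of one of its factors
by one. The index sets `Σ_{n,k}` and constants `C_σ` are the support and coefficients of `Q_{n,k}`
written as a linear combination of such monomials.
-/

open MeasureTheory Filter Topology Set
open scoped ENNReal NNReal

noncomputable section

/-- The operator `D_{w,x,η}`, acting on `f ∈ C¹(ℝ)` by
`D_{w,x,η}(f)(s) = (w(x)/(2πiη)) · (f / w(·+x))'(s)`. -/
def Dop (w : ℝ → ℝ) (x η : ℝ) (f : ℝ → ℂ) : ℝ → ℂ := fun s =>
  ((w x : ℂ) / (2 * Real.pi * Complex.I * η)) * deriv (fun u => f u / (w (u + x) : ℂ)) s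

theorem ContDiff.hasDerivAt_iteratedDeriv {𝕜 F : Type*} [NontriviallyNormedField 𝕜]
    [NormedAddCommGroup F] [NormedSpace 𝕜 F] {f : 𝕜 → F} {n k : ℕ} (hf : ContDiff 𝕜 n f)
    (hk : k < n) (t : 𝕜) : HasDerivAt (iteratedDeriv k f) (iteratedDeriv (k + 1) f t) t := by
  rw [iteratedDeriv_succ]
  exact (hf.differentiable_iteratedDeriv k (mod_cast hk) t).hasDerivAt

theorem HasDerivAt.div_pow_succ {𝕜 𝕜' : Type*} [NontriviallyNormedField 𝕜]
    [NontriviallyNormedField 𝕜'] [NormedAlgebra 𝕜 𝕜'] {N W : 𝕜 → 𝕜'} {N' W' : 𝕜'} {s : 𝕜}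
    (hN : HasDerivAt N N' s) (hW : HasDerivAt W W' s) (hWs : W s ≠ 0) (m : ℕ) :
    HasDerivAt (fun u => N u / W u ^ (m + 1))
      ((W s * N' - (m + 1) * W' * N s) / W s ^ (m + 2)) s := by
  convert hN.fun_div (hW.fun_pow (m + 1)) (pow_ne_zero _ hWs) using 1
  field_simp
  push_cast
  ring

namespace Dop

variable (w : ℝ → ℝ)

def derivMonomial {m : ℕ} (σ : Fin m → ℕ) (t : ℝ) : ℝ := ∏ j, iteratedDeriv (σ j) w t

def derivPoly (m b : ℕ) : Submodule ℝ (ℝ → ℝ) :=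
  Submodule.span ℝ (derivMonomial w '' {σ : Fin m → ℕ | ∀ j, σ j ≤ b})

variable {w}

theorem derivMonomial_cons {m : ℕ} (i : ℕ) (σ : Fin m → ℕ) :
    derivMonomial w (Fin.cons i σ : Fin (m + 1) → ℕ) = iteratedDeriv i w * derivMonomial w σ := by
  funext t
  simp [derivMonomial, Fin.prod_univ_succ]

theorem derivMonomial_mem_derivPoly {m b : ℕ} {σ : Fin m → ℕ} (hσ : ∀ j, σ j ≤ b) :
    derivMonomial w σ ∈ derivPoly w m b :=
  Submodule.subset_span ⟨σ, hσ, rfl⟩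

theorem derivPoly_mono {m b b' : ℕ} (h : b ≤ b') : derivPoly w m b ≤ derivPoly w m b' :=
  Submodule.span_mono (Set.image_mono fun _ hσ j => (hσ j).trans h)

theorem iteratedDeriv_mul_mem_derivPoly {m b i : ℕ} (hi : i ≤ b) {P : ℝ → ℝ}
    (hP : P ∈ derivPoly w m b) : iteratedDeriv i w * P ∈ derivPoly w (m + 1) b := by
  suffices derivPoly w m b ≤
      (derivPoly w (m + 1) b).comap (LinearMap.mulLeft ℝ (iteratedDeriv i w)) from this hP
  refine Submodule.span_le.2 ?_
  rintro _ ⟨σ, hσ, rfl⟩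
  rw [SetLike.mem_coe, Submodule.mem_comap, LinearMap.mulLeft_apply, ← derivMonomial_cons]
  exact derivMonomial_mem_derivPoly (Fin.forall_fin_succ.2 ⟨hi, hσ⟩)

theorem exists_hasDerivAt_derivMonomial {n b : ℕ} (hw : ContDiff ℝ n w) (hb : b < n) :
    ∀ {m : ℕ} (σ : Fin m → ℕ), (∀ j, σ j ≤ b) →
      ∃ P' ∈ derivPoly w m (b + 1), ∀ t, HasDerivAt (derivMonomial w σ) (P' t) t
  | 0, σ, _ => ⟨0, zero_mem _, fun t => by
      rw [show derivMonomial w σ = fun _ => 1 by funext; simp [derivMonomial]]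
      exact hasDerivAt_const t 1⟩
  | m + 1, σ, hσ => by
    obtain ⟨P', hP', hder⟩ := exists_hasDerivAt_derivMonomial hw hb (Fin.tail σ) fun j => hσ _
    rw [← Fin.cons_self_tail σ, derivMonomial_cons]
    refine ⟨iteratedDeriv (σ 0 + 1) w * derivMonomial w (Fin.tail σ) + iteratedDeriv (σ 0) w * P',
      add_mem ?_ ?_, fun t => ?_⟩
    · exact iteratedDeriv_mul_mem_derivPoly (Nat.succ_le_succ (hσ 0))
        (derivMonomial_mem_derivPoly fun j => (hσ _).trans b.le_succ)
    · exact iteratedDeriv_mul_mem_derivPoly ((hσ 0).trans b.le_succ) hP'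
    · exact ((hw.hasDerivAt_iteratedDeriv ((hσ 0).trans_lt hb) t).mul (hder t)).congr_deriv
        (by simp)

theorem exists_hasDerivAt_of_mem_derivPoly {n m b : ℕ} (hw : ContDiff ℝ n w) (hb : b < n)
    {P : ℝ → ℝ} (hP : P ∈ derivPoly w m b) :
    ∃ P' ∈ derivPoly w m (b + 1), ∀ t, HasDerivAt P (P' t) t := by
  rw [derivPoly] at hP
  induction hP using Submodule.span_induction with
  | mem _ hP =>
    obtain ⟨σ, hσ, rfl⟩ := hP
    exact exists_hasDerivAt_derivMonomial hw hb σ hσ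
  | zero => exact ⟨0, zero_mem _, fun t => hasDerivAt_const t 0⟩
  | add P Q _ _ hP hQ =>
    obtain ⟨P', hP', hPd⟩ := hP
    obtain ⟨Q', hQ', hQd⟩ := hQ
    exact ⟨P' + Q', add_mem hP' hQ', fun t => (hPd t).add (hQd t)⟩
  | smul c P _ hP =>
    obtain ⟨P', hP', hPd⟩ := hP
    exact ⟨c • P', Submodule.smul_mem _ c hP', fun t => (hPd t).const_smul c⟩

theorem hasDerivAt_deriv_of_mem_derivPoly {n m b : ℕ} (hw : ContDiff ℝ n w) (hb : b < n)
    {P : ℝ → ℝ} (hP : P ∈ derivPoly w m b) (t : ℝ) : HasDerivAt P (deriv P t) t := by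
  obtain ⟨P', -, hder⟩ := exists_hasDerivAt_of_mem_derivPoly hw hb hP
  exact (hder t).differentiableAt.hasDerivAt

theorem deriv_mem_derivPoly {n m b : ℕ} (hw : ContDiff ℝ n w) (hb : b < n)
    {P : ℝ → ℝ} (hP : P ∈ derivPoly w m b) : deriv P ∈ derivPoly w m (b + 1) := by
  obtain ⟨P', hP', hder⟩ := exists_hasDerivAt_of_mem_derivPoly hw hb hP
  rwa [show deriv P = P' from funext fun t => (hder t).deriv]

variable (w) in
def coeff : ℕ → ℕ → ℝ → ℝ
  | 0, 0 => 1
  | 0, _ + 1 => 0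
  | m + 1, 0 => w * deriv (coeff m 0) - (2 * m + 1 : ℝ) • (deriv w * coeff m 0)
  | m + 1, k + 1 => w * (coeff m k + deriv (coeff m (k + 1)))
      - (2 * m + 1 : ℝ) • (deriv w * coeff m (k + 1))

theorem coeff_eq_zero : ∀ {m k : ℕ}, m < k → coeff w m k = 0
  | 0, _ + 1, _ => rfl
  | m + 1, k + 1, h => by
    rw [coeff, coeff_eq_zero (by omega : m < k), coeff_eq_zero (by omega : m < k + 1)]
    simp

theorem coeff_mem_derivPoly {n : ℕ} (hw : ContDiff ℝ n w) :
    ∀ {m : ℕ}, m ≤ n → ∀ k, coeff w m k ∈ derivPoly w m (m - k)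
  | 0, _, 0 => by
    convert derivMonomial_mem_derivPoly (w := w) (b := 0) (σ := Fin.elim0) (fun j => j.elim0)
    funext t
    simp [coeff, derivMonomial]
  | 0, _, _ + 1 => zero_mem _
  | m + 1, hm, 0 => by
    have hQ := coeff_mem_derivPoly hw (by omega : m ≤ n) 0
    rw [coeff]
    refine sub_mem ?_ (Submodule.smul_mem _ _ ?_)
    · simpa using iteratedDeriv_mul_mem_derivPoly (i := 0) (Nat.zero_le _)
        (deriv_mem_derivPoly hw (by omega : m - 0 < n) hQ)
    · simpa using iteratedDeriv_mul_mem_derivPoly (i := 1) (by omega)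
        (derivPoly_mono (by omega : m - 0 ≤ m + 1) hQ)
  | m + 1, hm, k + 1 => by
    have hQ := coeff_mem_derivPoly hw (by omega : m ≤ n)
    rw [coeff, Nat.add_sub_add_right]
    by_cases hk : k < m
    · refine sub_mem ?_ (Submodule.smul_mem _ _ ?_)
      · simpa using iteratedDeriv_mul_mem_derivPoly (i := 0) (Nat.zero_le _) (add_mem (hQ k)
          (derivPoly_mono (by omega) (deriv_mem_derivPoly hw (by omega : m - (k + 1) < n)
            (hQ (k + 1)))))
      · simpa using iteratedDeriv_mul_mem_derivPoly (i := 1) (by omega)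
          (derivPoly_mono (by omega : m - (k + 1) ≤ m - k) (hQ (k + 1)))
    · rw [coeff_eq_zero (by omega : m < k + 1)]
      simpa using iteratedDeriv_mul_mem_derivPoly (i := 0) (Nat.zero_le _) (hQ k)

theorem sum_mul_coeff_succ (a : ℕ → ℂ) (m : ℕ) (t : ℝ) :
    ∑ k ∈ Finset.range (m + 2), a k * coeff w (m + 1) k t =
      w t * ∑ k ∈ Finset.range (m + 1), (a (k + 1) * coeff w m k t + a k * deriv (coeff w m k) t)
        - (2 * m + 1) * deriv w t * ∑ k ∈ Finset.range (m + 1), a k * coeff w m k t := by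
  have hshift (q : ℕ → ℂ) (hq : q (m + 1) = 0) :
      ∑ k ∈ Finset.range (m + 1), a k * q k =
        ∑ k ∈ Finset.range (m + 1), a (k + 1) * q (k + 1) + a 0 * q 0 := by
    have h := Finset.sum_range_succ' (fun k => a k * q k) (m + 1)
    rwa [Finset.sum_range_succ, hq, mul_zero, add_zero] at h
  have hQ := hshift (fun k => (coeff w m k t : ℂ)) (by simp [coeff_eq_zero])
  have hQ' := hshift (fun k => ((deriv (coeff w m k) t : ℝ) : ℂ)) (by simp [coeff_eq_zero])
  have hsucc : ∑ k ∈ Finset.range (m + 1), a (k + 1) * coeff w (m + 1) (k + 1) t =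
      w t * ∑ k ∈ Finset.range (m + 1), a (k + 1) * coeff w m k t
        + w t * ∑ k ∈ Finset.range (m + 1), a (k + 1) * deriv (coeff w m (k + 1)) t
        - (2 * m + 1) * deriv w t *
          ∑ k ∈ Finset.range (m + 1), a (k + 1) * coeff w m (k + 1) t := by
    simp only [Finset.mul_sum, ← Finset.sum_add_distrib, ← Finset.sum_sub_distrib]
    refine Finset.sum_congr rfl fun k _ => ?_
    simp only [coeff, Pi.sub_apply, Pi.mul_apply, Pi.add_apply, Pi.smul_apply, smul_eq_mul]
    push_cast
    ring
  rw [Finset.sum_add_distrib, hQ, hQ', Finset.sum_range_succ', hsucc]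
  simp only [coeff, Pi.sub_apply, Pi.mul_apply, Pi.smul_apply, smul_eq_mul]
  push_cast
  ring

theorem apply_of_eq {g N : ℝ → ℂ} {A N' : ℂ} {x η s w' : ℝ} {m : ℕ}
    (hg : ∀ u, g u = A * ((w (u + x) : ℂ) ^ (2 * m))⁻¹ * N u) (hN : HasDerivAt N N' s)
    (hw : HasDerivAt w w' (s + x)) (hw0 : w (s + x) ≠ 0) :
    Dop w x η g s = (w x / (2 * Real.pi * Complex.I * η)) * A *
      ((w (s + x) : ℂ) ^ (2 * (m + 1)))⁻¹ * (w (s + x) * N' - (2 * m + 1) * w' * N s) := by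
  have hW : HasDerivAt (fun u => (w (u + x) : ℂ)) w' s := (hw.comp_add_const s x).ofReal_comp
  have hquot : (fun u => g u / w (u + x)) = fun u => A * (N u / (w (u + x) : ℂ) ^ (2 * m + 1)) := by
    funext u
    simp only [hg, pow_succ, div_eq_mul_inv, mul_inv]
    ring
  rw [Dop, hquot, ((hN.div_pow_succ hW (Complex.ofReal_ne_zero.2 hw0) (2 * m)).const_mul A).deriv]
  push_cast
  ring

theorem iterate_apply {n m : ℕ} (hw : ContDiff ℝ n w) (hw0 : ∀ t, w t ≠ 0) {f : ℝ → ℂ}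
    (hf : ContDiff ℝ n f) (hm : m ≤ n) (x η s : ℝ) :
    (Dop w x η)^[m] f s = (w x / (2 * Real.pi * Complex.I * η)) ^ m *
      ((w (s + x) : ℂ) ^ (2 * m))⁻¹ *
        ∑ k ∈ Finset.range (m + 1), iteratedDeriv k f s * coeff w m k (s + x) := by
  induction m generalizing s with
  | zero => simp [coeff]
  | succ m ih =>
    have hQ (k : ℕ) (hk : k ∈ Finset.range (m + 1)) :
        HasDerivAt (fun u => (coeff w m k (u + x) : ℂ)) ((deriv (coeff w m k) (s + x) : ℝ) : ℂ) s :=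
      ((hasDerivAt_deriv_of_mem_derivPoly hw (by omega : m - k < n)
        (coeff_mem_derivPoly hw (by omega) k) (s + x)).comp_add_const s x).ofReal_comp
    have hN := HasDerivAt.fun_sum fun k hk =>
      (hf.hasDerivAt_iteratedDeriv ((Finset.mem_range.1 hk).trans_le hm) s).mul (hQ k hk)
    have hw' : HasDerivAt w (deriv w (s + x)) (s + x) :=
      (hw.differentiable (by exact_mod_cast (by omega : n ≠ 0)) _).hasDerivAt
    rw [Function.iterate_succ_apply', apply_of_eq (fun u => ih (by omega) u) hN hw' (hw0 _),
      sum_mul_coeff_succ]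
    ring

end Dop

/-- Let `n ∈ ℕ` and `w ∈ Cⁿ(ℝ)` positive.  There exist finite index sets
`Σ_{n,k}` of tuples `σ = (σ₁,…,σₙ)` with `σ_j ∈ {0,…,n−k}` and real constants `C_σ`
(independent of `f`, `x`, `η`) such that, with
`P_{n,k}(s) = Σ_{σ∈Σ_{n,k}} C_σ ∏_j w^{(σ_j)}(s)`, the `n`-fold iterate of `D_{w,x,η}`
satisfies, for all `f ∈ Cⁿ(ℝ)`, `s, x ∈ ℝ`, `η ≠ 0`:
`Dⁿ_{w,x,η}(f)(s) = (w(x)ⁿ/(2πiη)ⁿ) · w(s+x)^{−2n} · Σ_{k=0}^n f^{(k)}(s) P_{n,k}(s+x)`. -/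
theorem Dop_iterate_formula (n : ℕ) (w : ℝ → ℝ)
    (hw : ContDiff ℝ n w) (hwpos : ∀ s : ℝ, 0 < w s) :
    ∃ (Sig : ℕ → Finset (Fin n → ℕ)) (Cc : ℕ → (Fin n → ℕ) → ℝ),
      (∀ k ≤ n, ∀ σ ∈ Sig k, ∀ j : Fin n, σ j ≤ n - k) ∧
      ∀ f : ℝ → ℂ, ContDiff ℝ n f → ∀ s x η : ℝ, η ≠ 0 →
        (Dop w x η)^[n] f s =
          ((w x : ℂ) ^ n / (2 * Real.pi * Complex.I * η) ^ n) * ((w (s + x) : ℂ) ^ (2 * n))⁻¹ *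
            ∑ k ∈ Finset.range (n + 1),
              iteratedDeriv k f s *
                ∑ σ ∈ Sig k, (Cc k σ : ℂ) * ∏ j : Fin n, ((iteratedDeriv (σ j) w (s + x) : ℝ) : ℂ) := by
  choose l hl hsum using fun k =>
    (Finsupp.mem_span_image_iff_linearCombination ℝ).1 (Dop.coeff_mem_derivPoly hw le_rfl k)
  refine ⟨fun k => (l k).support, fun k σ => l k σ, fun k _ σ hσ => hl k hσ,
    fun f hf s x η _ => ?_⟩
  rw [Dop.iterate_apply hw (fun t => (hwpos t).ne') hf le_rfl, div_pow]
  refine congrArg _ (Finset.sum_congr rfl fun k _ => ?_)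
  rw [← hsum k, Finsupp.linearCombination_apply, Finsupp.sum, Finset.sum_apply]
  push_cast
  simp [Dop.derivMonomial]
end
end

section
/- Let n ∈ ℕ and let w ∈ Cⁿ(ℝ) be positive with w(x+y) ≤ C·w(x)·w(y) for all x,y ∈ ℝ, and suppose there are constants D_k > 0 with |w^{(k)}(s)/w(s)| ≤ D_k for all s ∈ ℝ and all k = 0,…,n. Then there exists a finite constant C_n > 0 such that |Dⁿ_{w,x,η}(f)(s)| ≤ C_n · (w(−s)/(2π|η|))ⁿ · Σ_{k=0}^n |f^{(k)}(s)| for all s, x ∈ ℝ, all η ≠ 0 and all f ∈ Cⁿ(ℝ). -/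
/-!
Write `v = w(· + x)`, so that `Dⁿ_{w,x,η} f = (w(x)/(2πiη))ⁿ Tⁿ f` with `T g = (g / v)'`.
Since `v^{(k)} = O(v)`, the identity `(1/v)' = -v' (1/v)²` and the Leibniz rule give
`(1/v)^{(k)} = O(1/v)` for `k ≤ n`, and then by induction on `m` the derivatives of order
`≤ n - m` of `Tᵐ f` at `s` are `O(v(s)⁻ᵐ Σ_{k ≤ n} |f^{(k)}(s)|)`. All constants depend only on
`n` and the `D_k`, and bounds on the derivatives of `w` are translation invariant, so they are
uniform in `x`. Finally, submultiplicativity gives `w(x) ≤ C w(-s) w(s + x)`.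
-/

open MeasureTheory Filter Topology Set
open scoped ENNReal NNReal

noncomputable section

section DerivsBoundedBy

variable {𝕜 : Type*} [NontriviallyNormedField 𝕜]
  {F : Type*} [NormedAddCommGroup F] [NormedSpace 𝕜 F]
  {𝔸 : Type*} [NormedRing 𝔸] [NormedAlgebra 𝕜 𝔸]
  {N : ℕ} {K L : ℝ} {ρ σ : 𝕜 → ℝ}

def DerivsBoundedBy (N : ℕ) (K : ℝ) (ρ : 𝕜 → ℝ) (g : 𝕜 → F) : Prop :=
  ContDiff 𝕜 N g ∧ ∀ k ≤ N, ∀ s, ‖iteratedDeriv k g s‖ ≤ K * ρ s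

theorem derivsBoundedBy_sum_norm_iteratedDeriv {f : 𝕜 → F} (hf : ContDiff 𝕜 N f) :
    DerivsBoundedBy N 1 (fun s => ∑ k ∈ Finset.range (N + 1), ‖iteratedDeriv k f s‖) f :=
  ⟨hf, fun k hk s => by
    rw [one_mul]
    exact Finset.single_le_sum (f := fun k => ‖iteratedDeriv k f s‖) (fun _ _ => norm_nonneg _)
      (Finset.mem_range.mpr (by omega))⟩

namespace DerivsBoundedBy

variable {g : 𝕜 → F}

theorem norm_le (h : DerivsBoundedBy N K ρ g) (s : 𝕜) : ‖g s‖ ≤ K * ρ s := by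
  simpa using h.2 0 (Nat.zero_le N) s

theorem mono {M : ℕ} (h : DerivsBoundedBy N K ρ g) (hMN : M ≤ N) : DerivsBoundedBy M K ρ g :=
  ⟨h.1.of_le (by exact_mod_cast hMN), fun k hk => h.2 k (hk.trans hMN)⟩

theorem mono_const {K' : ℝ} (h : DerivsBoundedBy N K ρ g) (hK : K ≤ K') (hρ : 0 ≤ ρ) :
    DerivsBoundedBy N K' ρ g :=
  ⟨h.1, fun k hk s => (h.2 k hk s).trans (mul_le_mul_of_nonneg_right hK (hρ s))⟩

theorem neg (h : DerivsBoundedBy N K ρ g) : DerivsBoundedBy N K ρ (fun s => -g s) :=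
  ⟨h.1.neg, fun k hk s => by simpa using h.2 k hk s⟩

theorem deriv (h : DerivsBoundedBy (N + 1) K ρ g) : DerivsBoundedBy N K ρ (_root_.deriv g) :=
  ⟨h.1.deriv', fun k hk s => by simpa [iteratedDeriv_succ'] using h.2 (k + 1) (by omega) s⟩

theorem of_deriv (hg : ContDiff 𝕜 (N + 1) g) (h₀ : ∀ s, ‖g s‖ ≤ K * ρ s)
    (h : DerivsBoundedBy N K ρ (_root_.deriv g)) : DerivsBoundedBy (N + 1) K ρ g := by
  refine ⟨by exact_mod_cast hg, fun k hk s => ?_⟩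
  rcases k with _ | k
  · simpa using h₀ s
  · rw [iteratedDeriv_succ']
    exact h.2 k (by omega) s

theorem comp_add_const (h : DerivsBoundedBy N K ρ g) (x : 𝕜) :
    DerivsBoundedBy N K (fun s => ρ (s + x)) (fun s => g (s + x)) :=
  ⟨h.1.comp (contDiff_id.add contDiff_const), fun k hk s => by
    simpa [iteratedDeriv_comp_add_const] using h.2 k hk (s + x)⟩

theorem comp_linearIsometry {G : Type*} [NormedAddCommGroup G] [NormedSpace 𝕜 G]
    (h : DerivsBoundedBy N K ρ g) (e : F →ₗᵢ[𝕜] G) : DerivsBoundedBy N K ρ (e ∘ g) := by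
  refine ⟨e.contDiff.comp h.1, fun k hk s => ?_⟩
  rw [← norm_iteratedFDeriv_eq_norm_iteratedDeriv,
    e.norm_iteratedFDeriv_comp_left h.1.contDiffAt (by exact_mod_cast hk),
    norm_iteratedFDeriv_eq_norm_iteratedDeriv]
  exact h.2 k hk s

theorem mul {g h : 𝕜 → 𝔸} (hg : DerivsBoundedBy N K ρ g) (hh : DerivsBoundedBy N L σ h) :
    DerivsBoundedBy N (2 ^ N * K * L) (fun s => ρ s * σ s) (fun s => g s * h s) := by
  refine ⟨hg.1.mul hh.1, fun k hk s => ?_⟩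
  have hKL : 0 ≤ K * ρ s * (L * σ s) :=
    mul_nonneg ((norm_nonneg _).trans (hg.norm_le s)) ((norm_nonneg _).trans (hh.norm_le s))
  have hLeibniz := norm_iteratedFDeriv_mul_le hg.1 hh.1 s (n := k) (by exact_mod_cast hk)
  simp only [norm_iteratedFDeriv_eq_norm_iteratedDeriv] at hLeibniz
  calc ‖iteratedDeriv k (fun s => g s * h s) s‖
      ≤ ∑ i ∈ Finset.range (k + 1), (k.choose i : ℝ) * (K * ρ s) * (L * σ s) := by
        refine hLeibniz.trans (Finset.sum_le_sum fun i hi => ?_)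
        have hi : i ≤ k := Nat.lt_succ_iff.mp (Finset.mem_range.mp hi)
        have hgi := hg.2 i (hi.trans hk) s
        gcongr
        · exact mul_nonneg (Nat.cast_nonneg _) ((norm_nonneg _).trans hgi)
        · exact hh.2 (k - i) (by omega) s
    _ = 2 ^ k * (K * ρ s * (L * σ s)) := by
        have hchoose : ∑ i ∈ Finset.range (k + 1), (k.choose i : ℝ) = 2 ^ k := by
          exact_mod_cast Nat.sum_range_choose k
        rw [← Finset.sum_mul, ← Finset.sum_mul, hchoose, mul_assoc]
    _ ≤ 2 ^ N * (K * ρ s * (L * σ s)) := by gcongr; norm_num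
    _ = 2 ^ N * K * L * (ρ s * σ s) := by ring

theorem of_norm_iteratedDeriv_div_le {v : 𝕜 → 𝕜} {D : ℕ → ℝ}
    (hv : ContDiff 𝕜 N v) (hv₀ : ∀ s, v s ≠ 0)
    (hD : ∀ k ≤ N, ∀ s, ‖iteratedDeriv k v s / v s‖ ≤ D k) :
    DerivsBoundedBy N (∑ k ∈ Finset.range (N + 1), D k) (‖v ·‖) v := by
  refine ⟨hv, fun k hk s => ?_⟩
  have hDk : D k ≤ ∑ j ∈ Finset.range (N + 1), D j :=
    Finset.single_le_sum (fun j hj => (norm_nonneg _).trans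
      (hD j (Nat.lt_succ_iff.mp (Finset.mem_range.mp hj)) s)) (Finset.mem_range.mpr (by omega))
  calc ‖iteratedDeriv k v s‖ = ‖iteratedDeriv k v s / v s‖ * ‖v s‖ := by
        rw [norm_div, div_mul_cancel₀ _ (norm_ne_zero_iff.mpr (hv₀ s))]
    _ ≤ (∑ j ∈ Finset.range (N + 1), D j) * ‖v s‖ := by
        gcongr
        exact (hD k hk s).trans hDk

theorem exists_inv {v : 𝕜 → 𝕜} (hv : ∀ s, v s ≠ 0) (h : DerivsBoundedBy N K (‖v ·‖) v) :
    ∃ E, 0 < E ∧ DerivsBoundedBy N E (‖v ·‖⁻¹) (fun s => (v s)⁻¹) := by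
  induction N with
  | zero =>
    refine ⟨1, one_pos, h.1.inv hv, fun k hk s => ?_⟩
    obtain rfl : k = 0 := Nat.le_zero.mp hk
    simp
  | succ N ih =>
    obtain ⟨E, hE, hinv⟩ := ih (h.mono N.le_succ)
    have hderiv : _root_.deriv (fun s => (v s)⁻¹) =
        fun s => -(_root_.deriv v s * (v s)⁻¹ * (v s)⁻¹) := by
      funext s
      rw [deriv_fun_inv'' ((h.1.differentiable (by simp)).differentiableAt) (hv s)]
      field_simp
    have hweight : (fun s => ‖v s‖ * ‖v s‖⁻¹ * ‖v s‖⁻¹) = (‖v ·‖⁻¹) := by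
      funext s
      field_simp [norm_ne_zero_iff.mpr (hv s)]
    have hderiv_bound := ((h.deriv.mul hinv).mul hinv).neg
    rw [hweight, ← hderiv] at hderiv_bound
    refine ⟨max (1 : ℝ) (2 ^ N * (2 ^ N * K * E) * E), lt_max_of_lt_left one_pos, ?_⟩
    refine of_deriv (h.1.inv hv) (fun s => ?_)
      (hderiv_bound.mono_const (le_max_right _ _) fun s => inv_nonneg.mpr (norm_nonneg _))
    rw [norm_inv]
    exact le_mul_of_one_le_left (inv_nonneg.mpr (norm_nonneg _)) (le_max_left _ _)

end DerivsBoundedBy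

def derivMul (ψ g : 𝕜 → 𝔸) : 𝕜 → 𝔸 := deriv fun s => g s * ψ s

theorem derivMul_const_mul {𝕜' : Type*} [NormedDivisionRing 𝕜'] [NormedAlgebra 𝕜 𝕜']
    (ψ g : 𝕜 → 𝕜') (a : 𝕜') : derivMul ψ (fun s => a * g s) = fun s => a * derivMul ψ g s := by
  simp only [derivMul, mul_assoc, deriv_const_mul_field']

theorem DerivsBoundedBy.derivMul_iterate {g ψ : 𝕜 → 𝔸} {E : ℝ}
    (hg : DerivsBoundedBy N K ρ g) (hψ : DerivsBoundedBy N E σ ψ) (hK : 0 ≤ K) (hE : 0 ≤ E)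
    (hρ : 0 ≤ ρ) (hσ : 0 ≤ σ) :
    ∀ m ≤ N, DerivsBoundedBy (N - m) ((2 ^ N * E) ^ m * K) (fun s => ρ s * σ s ^ m)
      ((derivMul ψ)^[m] g) := by
  intro m
  induction m with
  | zero => intro _; simpa using hg
  | succ m ih =>
    intro hm
    obtain ⟨M, hM⟩ : ∃ M, N - m = M + 1 := ⟨N - (m + 1), by omega⟩
    have hstep := ((ih (by omega)).mul (hψ.mono (Nat.sub_le N m)))
    rw [hM] at hstep
    have hweight : (fun s => ρ s * σ s ^ m * σ s) = fun s => ρ s * σ s ^ (m + 1) := by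
      funext s; ring
    rw [hweight] at hstep
    rw [Function.iterate_succ_apply', show N - (m + 1) = M by omega]
    refine hstep.deriv.mono_const ?_ fun s => mul_nonneg (hρ s) (pow_nonneg (hσ s) _)
    calc 2 ^ (M + 1) * ((2 ^ N * E) ^ m * K) * E ≤ 2 ^ N * ((2 ^ N * E) ^ m * K) * E := by
          gcongr
          · norm_num
          · omega
      _ = (2 ^ N * E) ^ (m + 1) * K := by ring

end DerivsBoundedBy

section Submultiplicative

variable {G : Type*} [AddGroup G] {w : G → ℝ} {C : ℝ}

theorem submultiplicative_const_pos (hw₀ : 0 < w 0) (hwsub : ∀ x y, w (x + y) ≤ C * w x * w y) :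
    0 < C := by
  have h := hwsub 0 0
  rw [add_zero] at h
  exact pos_of_mul_pos_left (by nlinarith) hw₀.le

theorem div_le_of_submultiplicative (hwpos : ∀ s, 0 < w s)
    (hwsub : ∀ x y, w (x + y) ≤ C * w x * w y) (s x : G) : w x / w (s + x) ≤ C * w (-s) := by
  rw [div_le_iff₀ (hwpos (s + x))]
  simpa using hwsub (-s) (s + x)

end Submultiplicative

theorem Dop_eq (w : ℝ → ℝ) (x η : ℝ) (f : ℝ → ℂ) :
    Dop w x η f = fun s => (w x : ℂ) / (2 * Real.pi * Complex.I * η) *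
      derivMul (fun u => (((w (u + x))⁻¹ : ℝ) : ℂ)) f s := by
  unfold Dop derivMul
  simp only [Complex.ofReal_inv, div_eq_mul_inv]

theorem Dop_iterate (w : ℝ → ℝ) (x η : ℝ) (f : ℝ → ℂ) (m : ℕ) :
    (Dop w x η)^[m] f = fun s => ((w x : ℂ) / (2 * Real.pi * Complex.I * η)) ^ m *
      (derivMul (fun u => (((w (u + x))⁻¹ : ℝ) : ℂ)))^[m] f s := by
  induction m with
  | zero => simp
  | succ m ih =>
    rw [Function.iterate_succ_apply', ih, Dop_eq, derivMul_const_mul, Function.iterate_succ_apply']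
    funext s
    ring

theorem norm_Dop_iterate_apply (w : ℝ → ℝ) {x : ℝ} (hwx : 0 < w x) (η : ℝ) (f : ℝ → ℂ)
    (m : ℕ) (s : ℝ) : ‖(Dop w x η)^[m] f s‖ = (w x / (2 * Real.pi * |η|)) ^ m *
      ‖(derivMul (fun u => (((w (u + x))⁻¹ : ℝ) : ℂ)))^[m] f s‖ := by
  simp [Dop_iterate, abs_of_pos hwx, abs_of_pos Real.pi_pos]

theorem Dop_iterate_estimate_general (n : ℕ) (w : ℝ → ℝ)
    (hw : ContDiff ℝ n w) (hwpos : ∀ s : ℝ, 0 < w s)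
    (C : ℝ) (hwsub : ∀ x y : ℝ, w (x + y) ≤ C * w x * w y)
    (Dk : ℕ → ℝ)
    (hder : ∀ k ≤ n, ∀ s : ℝ, |iteratedDeriv k w s / w s| ≤ Dk k) :
    ∃ Cn : ℝ, 0 < Cn ∧
      ∀ f : ℝ → ℂ, ContDiff ℝ n f → ∀ s x η : ℝ, η ≠ 0 →
        ‖(Dop w x η)^[n] f s‖ ≤
          Cn * (w (-s) / (2 * Real.pi * |η|)) ^ n *
            ∑ k ∈ Finset.range (n + 1), ‖iteratedDeriv k f s‖ := by
  have hw₀ : ∀ s, w s ≠ 0 := fun s => (hwpos s).ne'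
  obtain ⟨E, hE, hinv⟩ := (DerivsBoundedBy.of_norm_iteratedDeriv_div_le hw hw₀
    fun k hk s => (Real.norm_eq_abs _).trans_le (hder k hk s)).exists_inv hw₀
  have hC := submultiplicative_const_pos (hwpos 0) hwsub
  refine ⟨(2 ^ n * E * C) ^ n, by positivity, fun f hf s x η _ => ?_⟩
  have hψ : DerivsBoundedBy n E (fun u => ‖w (u + x)‖⁻¹)
      (fun u => (((w (u + x))⁻¹ : ℝ) : ℂ)) :=
    (hinv.comp_linearIsometry Complex.ofRealLI).comp_add_const x
  have hT := ((derivsBoundedBy_sum_norm_iteratedDeriv hf).derivMul_iterate hψ zero_le_one hE.le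
    (fun s => by positivity) (fun s => by positivity) n le_rfl).norm_le s
  set S := ∑ k ∈ Finset.range (n + 1), ‖iteratedDeriv k f s‖
  set P := 2 * Real.pi * |η|
  have hwx := hwpos x
  have hwsx := hwpos (s + x)
  rw [norm_Dop_iterate_apply w hwx]
  calc _ ≤ (w x / P) ^ n * ((2 ^ n * E) ^ n * 1 * (S * ‖w (s + x)‖⁻¹ ^ n)) := by gcongr
    _ = (2 ^ n * E) ^ n * (w x / w (s + x) / P) ^ n * S := by
        rw [Real.norm_of_nonneg hwsx.le]
        ring
    _ ≤ (2 ^ n * E) ^ n * (C * w (-s) / P) ^ n * S := by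
        gcongr
        exact div_le_of_submultiplicative hwpos hwsub s x
    _ = _ := by ring

/-- Let `n ∈ ℕ` and `w ∈ Cⁿ(ℝ)` be positive with `w(x+y) ≤ C w(x) w(y)` and
`|w^{(k)}(s)/w(s)| ≤ D_k` for all `s` and `k = 0,…,n`.  Then there is a finite constant
`C_n > 0` such that `|Dⁿ_{w,x,η}(f)(s)| ≤ C_n (w(−s)/(2π|η|))ⁿ Σ_{k=0}^n |f^{(k)}(s)|`
for all `s, x ∈ ℝ`, `η ≠ 0` and `f ∈ Cⁿ(ℝ)`. -/
theorem Dop_iterate_estimate (n : ℕ) (w : ℝ → ℝ)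
    (hw : ContDiff ℝ n w) (hwpos : ∀ s : ℝ, 0 < w s)
    (C : ℝ) (hwsub : ∀ x y : ℝ, w (x + y) ≤ C * w x * w y)
    (Dk : ℕ → ℝ) (hDkpos : ∀ k ≤ n, 0 < Dk k)
    (hder : ∀ k ≤ n, ∀ s : ℝ, |iteratedDeriv k w s / w s| ≤ Dk k) :
    ∃ Cn : ℝ, 0 < Cn ∧
      ∀ f : ℝ → ℂ, ContDiff ℝ n f → ∀ s x η : ℝ, η ≠ 0 →
        ‖(Dop w x η)^[n] f s‖ ≤
          Cn * (w (-s) / (2 * Real.pi * |η|)) ^ n *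
            ∑ k ∈ Finset.range (n + 1), ‖iteratedDeriv k f s‖ :=
  Dop_iterate_estimate_general n w hw hwpos C hwsub Dk hder
end
end

section
/- Let F : D → ℝ be a warping function such that w = (F⁻¹)′ is continuous and satisfies w(x+y) ≤ C·w(x)·w(y) for all x,y ∈ ℝ, let v be a symmetric submultiplicative weight, let n ∈ ℕ₀ and r > 0, and set w₁(s) := v(s)·w(−s)ⁿ·√(w(s))·(1+|s|)^{1+r} and w₂(s) := v(s)·√(w(−s))·(1+|s|)^{1+r}. If θ ∈ C^{n+1}(ℝ) satisfies θ^{(k)} ∈ L²_{w₁}(ℝ) ∩ L²_{w₂}(ℝ) for all 0 ≤ k ≤ n+1, then ∫_ℝ √(w(z))·v(z)·c_n(z) dz < ∞, where c_n(z) := max_{1≤k≤n+1} ∫_ℝ w(−s)ⁿ · |(θ·conj(θ(·−z)))^{(k)}(s)| ds. -/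
open MeasureTheory Filter Topology Set
open scoped ENNReal NNReal

noncomputable section

/-- A warping function `F : D → ℝ` (with `D = ℝ` or `D = (0,∞)`), bundled together with its
inverse `Finv`, its derivative `F'` and the associated weight `w = (F⁻¹)'`.  The fields record:
bijectivity of `F : D → ℝ`, `F ∈ C¹(D)` with `F' > 0`, strict decrease of `F'` in `|t|`,
`w = (F⁻¹)'`, oddness of `F` when `D = ℝ`, and `v`-moderateness of `w` for some
submultiplicative weight `v`. -/
structure Warping where
  D : Set ℝ
  F : ℝ → ℝ
  Finv : ℝ → ℝ
  F' : ℝ → ℝ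
  w : ℝ → ℝ
  hD : D = Set.univ ∨ D = Set.Ioi 0
  left_inv : ∀ x ∈ D, Finv (F x) = x
  mem_inv : ∀ s : ℝ, Finv s ∈ D
  right_inv : ∀ s : ℝ, F (Finv s) = s
  F_hasDeriv : ∀ t ∈ D, HasDerivAt F (F' t) t
  F'_cont : ContinuousOn F' D
  F'_pos : ∀ t ∈ D, 0 < F' t
  F'_dec : ∀ t₀ ∈ D, ∀ t₁ ∈ D, |t₀| < |t₁| → F' t₁ < F' t₀
  w_hasDeriv : ∀ s : ℝ, HasDerivAt Finv (w s) s
  w_pos : ∀ s : ℝ, 0 < w s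
  odd_of_univ : D = Set.univ → ∀ t, F (-t) = -F t
  moderate : ∃ (v : ℝ → ℝ) (C₀ : ℝ), (∀ x, 0 < v x) ∧ (∀ x y, v (x + y) ≤ v x * v y) ∧
      ∀ x y, w (x + y) ≤ C₀ * v x * w y

/-- The frequency-side warped atom `g_x = √(F'(x)) · (T_{F(x)}θ) ∘ F` on `D`, extended by zero. -/
def gxFun (W : Warping) (θ : ℝ → ℂ) (x : ℝ) : ℝ → ℂ :=
  W.D.indicator fun t => (Real.sqrt (W.F' x) : ℂ) * θ (W.F t - W.F x)

/-- The Fourier transform of the warped time-frequency atom `g_{x,ξ} = T_ξ (ǧ_x)`: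
`ĝ_{x,ξ}(t) = e^{-2πiξt} g_x(t)`. -/
def hatAtom (W : Warping) (θ : ℝ → ℂ) (x ξ : ℝ) : ℝ → ℂ := fun t =>
  gxFun W θ x t * Complex.exp (-(2 * Real.pi * Complex.I * ξ * t))

/-- The warped time-frequency transform `V_{θ,F} f (x,ξ) = ⟨f, g_{x,ξ}⟩`, expressed on the
Fourier side (via Plancherel) in terms of `fh = f̂`:
`V_{θ,F} f (x,ξ) = ∫ f̂(t) conj(g_x(t)) e^{2πiξt} dt`. -/
def warpedTransform (W : Warping) (θ fh : ℝ → ℂ) (x ξ : ℝ) : ℂ :=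
  ∫ t : ℝ, fh t * (starRingEnd ℂ) (gxFun W θ x t) * Complex.exp (2 * Real.pi * Complex.I * ξ * t)

/-!
Leibniz's rule bounds `(θ · conj θ(· - z))^{(k)}(s)` by the products `θ^{(j)}(s) θ^{(k-j)}(s - z)`,
and the submultiplicativity of `v` and `w` (in the form `√w(z) ≤ √C √w(s) √w(z - s)`) splits the
weight `√w(z) v(z) w(-s)ⁿ` between the two factors. After Tonelli, the `z`-integral of each term
is the integral of a correlation, i.e. the product of the `L¹`-norms of `v w(-·)ⁿ √w θ^{(j)}` and
`v √w(-·) θ^{(k-j)}`. These are finite by Cauchy–Schwarz, because `(1 + |s|)^{-(1+r)} ∈ L²`.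
-/

open ComplexConjugate

section Correlation

variable {G : Type*} [MeasurableSpace G] {μ : Measure G}

theorem lintegral_lconvolution [AddGroup G] [MeasurableAdd₂ G] [MeasurableNeg G]
    [μ.IsAddLeftInvariant] [SFinite μ] {f g : G → ℝ≥0∞}
    (hf : AEMeasurable f μ) (hg : AEMeasurable g μ) :
    ∫⁻ x, (f ⋆ₗ[μ] g) x ∂μ = (∫⁻ x, f x ∂μ) * ∫⁻ x, g x ∂μ := by
  simp only [lconvolution_def]
  rw [lintegral_lintegral_swap (by fun_prop)]
  calc ∫⁻ y, ∫⁻ x, f y * g (-y + x) ∂μ ∂μ = ∫⁻ y, f y * ∫⁻ x, g x ∂μ ∂μ := by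
        refine lintegral_congr fun y => ?_
        rw [lintegral_const_mul'' (f := fun x => g (-y + x)) _ (hg.comp_quasiMeasurePreserving
          (measurePreserving_add_left μ (-y)).quasiMeasurePreserving),
          lintegral_add_left_eq_self]
    _ = _ := lintegral_mul_const'' _ hf

theorem lintegral_mul_comp_sub_eq_lconvolution [AddCommGroup G] (f g : G → ℝ≥0∞) :
    (fun z => ∫⁻ s, f s * g (s - z) ∂μ) = f ⋆ₗ[μ] fun u => g (-u) := by
  funext z
  simp [lconvolution_def, neg_add_eq_sub]

variable [AddCommGroup G] [MeasurableAdd₂ G] [MeasurableNeg G] [μ.IsAddLeftInvariant]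
  [μ.IsNegInvariant] [SFinite μ] {f g : G → ℝ≥0∞}

theorem aemeasurable_lintegral_mul_comp_sub (hf : AEMeasurable f μ) (hg : AEMeasurable g μ) :
    AEMeasurable (fun z => ∫⁻ s, f s * g (s - z) ∂μ) μ := by
  rw [lintegral_mul_comp_sub_eq_lconvolution]
  exact aemeasurable_lconvolution hf (hg.comp_quasiMeasurePreserving
    (Measure.measurePreserving_neg μ).quasiMeasurePreserving)

theorem lintegral_lintegral_mul_comp_sub (hf : AEMeasurable f μ) (hg : AEMeasurable g μ) :
    ∫⁻ z, ∫⁻ s, f s * g (s - z) ∂μ ∂μ = (∫⁻ s, f s ∂μ) * ∫⁻ s, g s ∂μ := by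
  have hg' : AEMeasurable (fun u => g (-u)) μ :=
    hg.comp_quasiMeasurePreserving (Measure.measurePreserving_neg μ).quasiMeasurePreserving
  rw [lintegral_mul_comp_sub_eq_lconvolution, lintegral_lconvolution hf hg',
    lintegral_neg_eq_self g]

theorem lintegral_sum_sum_mul_lintegral_mul_comp_sub_lt_top {m : ℕ} (t : Finset ℕ)
    (ht : ∀ k ∈ t, k ≤ m) {e : ℕ → ℕ → ℝ≥0∞} (he : ∀ k j, e k j ≠ ∞) {a b : ℕ → G → ℝ≥0∞}
    (ha : ∀ j ≤ m, AEMeasurable (a j) μ) (hb : ∀ j ≤ m, AEMeasurable (b j) μ)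
    (ha' : ∀ j ≤ m, ∫⁻ s, a j s ∂μ ≠ ∞) (hb' : ∀ j ≤ m, ∫⁻ s, b j s ∂μ ≠ ∞) :
    ∫⁻ z, ∑ k ∈ t, ∑ j ∈ Finset.range (k + 1),
      e k j * ∫⁻ s, a j s * b (k - j) (s - z) ∂μ ∂μ < ∞ := by
  have hle {k j : ℕ} (hk : k ∈ t) (hj : j ∈ Finset.range (k + 1)) : j ≤ m :=
    (Finset.mem_range_succ_iff.mp hj).trans (ht k hk)
  have hle' {k : ℕ} (hk : k ∈ t) (j : ℕ) : k - j ≤ m := (Nat.sub_le k j).trans (ht k hk)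
  have hconv {k j : ℕ} (hk : k ∈ t) (hj : j ∈ Finset.range (k + 1)) :
      AEMeasurable (fun z => ∫⁻ s, a j s * b (k - j) (s - z) ∂μ) μ :=
    aemeasurable_lintegral_mul_comp_sub (ha j (hle hk hj)) (hb (k - j) (hle' hk j))
  rw [lintegral_finsetSum' _ fun k hk =>
    Finset.aemeasurable_fun_sum _ fun j hj => (hconv hk hj).const_mul _]
  refine ENNReal.sum_lt_top.mpr fun k hk => ?_
  rw [lintegral_finsetSum' _ fun j hj => (hconv hk hj).const_mul _]
  refine ENNReal.sum_lt_top.mpr fun j hj => ?_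
  rw [lintegral_const_mul'' _ (hconv hk hj),
    lintegral_lintegral_mul_comp_sub (ha j (hle hk hj)) (hb (k - j) (hle' hk j))]
  exact ENNReal.mul_lt_top (he k j).lt_top
    (ENNReal.mul_lt_top (ha' j (hle hk hj)).lt_top (hb' (k - j) (hle' hk j)).lt_top)

end Correlation

theorem integrable_smul_of_memLp_two_mul_smul {α E : Type*} [MeasurableSpace α] {μ : Measure α}
    [NormedAddCommGroup E] [NormedSpace ℝ E] {ρ c : α → ℝ} {g : α → E} (hρ : ∀ x, ρ x ≠ 0)
    (hρinv : MemLp (fun x => (ρ x)⁻¹) 2 μ) (h : MemLp (fun x => (c x * ρ x) • g x) 2 μ) :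
    Integrable (fun x => c x • g x) μ := by
  rw [← memLp_one_iff_integrable]
  convert h.smul (r := 1) hρinv using 1
  funext x
  change c x • g x = (ρ x)⁻¹ • (c x * ρ x) • g x
  rw [smul_smul, mul_comm, mul_assoc, mul_inv_cancel₀ (hρ x), mul_one]

theorem memLp_two_inv_one_add_abs_rpow {p : ℝ} (hp : 1 < 2 * p) :
    MemLp (fun s : ℝ => ((1 + |s|) ^ p)⁻¹) 2 volume := by
  have hpos (s : ℝ) : 0 < 1 + |s| := by positivity
  have hcont : Continuous fun s : ℝ => ((1 + |s|) ^ p)⁻¹ :=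
    ((continuous_const.add continuous_abs).rpow_const fun s => Or.inl (hpos s).ne').inv₀
      fun s => (Real.rpow_pos_of_pos (hpos s) p).ne'
  rw [memLp_two_iff_integrable_sq hcont.aestronglyMeasurable]
  have hsq : (fun s : ℝ => ((1 + |s|) ^ p)⁻¹ ^ 2) = fun s => (1 + ‖s‖) ^ (-(2 * p)) := by
    funext s
    rw [Real.norm_eq_abs, ← Real.rpow_neg (hpos s).le, ← Real.rpow_natCast,
      ← Real.rpow_mul (hpos s).le]
    ring_nf
  rw [hsq]
  exact integrable_one_add_norm (by simpa using hp)

theorem integrable_mul_norm_of_memLp_two_mul_one_add_abs_rpow {E : Type*} [NormedAddCommGroup E]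
    [NormedSpace ℝ E] {p : ℝ} (hp : 1 < 2 * p) {ρ : ℝ → ℝ} (hρ : ∀ s, 0 ≤ ρ s) {g : ℝ → E}
    (h : MemLp (fun s => (ρ s * (1 + |s|) ^ p) • g s) 2 volume) :
    Integrable (fun s => ρ s * ‖g s‖) volume := by
  have hint := integrable_smul_of_memLp_two_mul_smul
    (fun s => (Real.rpow_pos_of_pos (by positivity : (0 : ℝ) < 1 + |s|) p).ne')
    (memLp_two_inv_one_add_abs_rpow hp) h
  simpa only [norm_smul, Real.norm_of_nonneg (hρ _)] using hint.norm

theorem norm_iteratedDeriv_mul_le {𝕜 A : Type*} [NontriviallyNormedField 𝕜] [NormedRing A]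
    [NormedAlgebra 𝕜 A] {f g : 𝕜 → A} {N : WithTop ℕ∞} (hf : ContDiff 𝕜 N f) (hg : ContDiff 𝕜 N g)
    (x : 𝕜) {k : ℕ} (hk : k ≤ N) :
    ‖iteratedDeriv k (fun y => f y * g y) x‖ ≤ ∑ j ∈ Finset.range (k + 1),
      (k.choose j : ℝ) * ‖iteratedDeriv j f x‖ * ‖iteratedDeriv (k - j) g x‖ := by
  simpa only [norm_iteratedFDeriv_eq_norm_iteratedDeriv] using norm_iteratedFDeriv_mul_le hf hg x hk

theorem norm_iteratedDeriv_conj_comp_sub (θ : ℝ → ℂ) (z s : ℝ) (j : ℕ) :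
    ‖iteratedDeriv j (fun u => conj (θ (u - z))) s‖ = ‖iteratedDeriv j θ (s - z)‖ := by
  have hconj : (fun u => conj (θ (u - z))) = Complex.conjLIE ∘ fun u => θ (u - z) := rfl
  rw [← norm_iteratedFDeriv_eq_norm_iteratedDeriv, hconj,
    Complex.conjLIE.norm_iteratedFDeriv_comp_left, norm_iteratedFDeriv_eq_norm_iteratedDeriv,
    iteratedDeriv_comp_sub_const]

theorem norm_iteratedDeriv_mul_conj_comp_sub_le {θ : ℝ → ℂ} {N : WithTop ℕ∞} (hθ : ContDiff ℝ N θ)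
    {k : ℕ} (hk : k ≤ N) (z s : ℝ) :
    ‖iteratedDeriv k (fun u => θ u * conj (θ (u - z))) s‖ ≤ ∑ j ∈ Finset.range (k + 1),
      (k.choose j : ℝ) * ‖iteratedDeriv j θ s‖ * ‖iteratedDeriv (k - j) θ (s - z)‖ := by
  have hψ : ContDiff ℝ N fun u => conj (θ (u - z)) :=
    Complex.conjCLE.contDiff.comp (hθ.comp (contDiff_id.sub contDiff_const))
  simpa only [norm_iteratedDeriv_conj_comp_sub] using norm_iteratedDeriv_mul_le hθ hψ s hk

section Weights

variable {w v : ℝ → ℝ} {C : ℝ}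

theorem sqrt_mul_le_of_submultiplicative (hw : ∀ x, 0 ≤ w x)
    (hwsub : ∀ x y, w (x + y) ≤ C * w x * w y) (hv : ∀ x, 0 ≤ v x) (hvsym : ∀ x, v (-x) = v x)
    (hvsub : ∀ x y, v (x + y) ≤ v x * v y) (z s : ℝ) :
    √(w z) * v z ≤ √C * (v s * √(w s)) * (v (s - z) * √(w (-(s - z)))) := by
  have hwz : w z ≤ C * w s * w (-(s - z)) := by simpa using hwsub s (z - s)
  have hvz : v z ≤ v s * v (s - z) := by simpa [← hvsym (s - z)] using hvsub s (z - s)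
  have hsqrt : √(w z) ≤ √C * √(w s) * √(w (-(s - z))) := by
    calc √(w z) ≤ √(C * w s * w (-(s - z))) := Real.sqrt_le_sqrt hwz
      _ = √C * √(w s) * √(w (-(s - z))) := by
        rw [Real.sqrt_mul' _ (hw _), Real.sqrt_mul' _ (hw _)]
  calc √(w z) * v z ≤ (√C * √(w s) * √(w (-(s - z)))) * (v s * v (s - z)) :=
        mul_le_mul hsqrt hvz (hv z) (by positivity)
    _ = √C * (v s * √(w s)) * (v (s - z) * √(w (-(s - z)))) := by ring

theorem sqrt_mul_pow_mul_norm_iteratedDeriv_mul_conj_le (hw : ∀ x, 0 ≤ w x)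
    (hwsub : ∀ x y, w (x + y) ≤ C * w x * w y) (hv : ∀ x, 0 ≤ v x) (hvsym : ∀ x, v (-x) = v x)
    (hvsub : ∀ x y, v (x + y) ≤ v x * v y) (n : ℕ) {θ : ℝ → ℂ} {N : WithTop ℕ∞}
    (hθ : ContDiff ℝ N θ) {k : ℕ} (hk : k ≤ N) (z s : ℝ) :
    √(w z) * v z * (w (-s) ^ n * ‖iteratedDeriv k (fun u => θ u * conj (θ (u - z))) s‖) ≤
      ∑ j ∈ Finset.range (k + 1), √C * k.choose j *
        ((v s * w (-s) ^ n * √(w s) * ‖iteratedDeriv j θ s‖) *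
          (v (s - z) * √(w (-(s - z))) * ‖iteratedDeriv (k - j) θ (s - z)‖)) := by
  calc _ ≤ √C * (v s * √(w s)) * (v (s - z) * √(w (-(s - z)))) * (w (-s) ^ n *
        ∑ j ∈ Finset.range (k + 1), (k.choose j : ℝ) * ‖iteratedDeriv j θ s‖ *
          ‖iteratedDeriv (k - j) θ (s - z)‖) :=
        mul_le_mul (sqrt_mul_le_of_submultiplicative hw hwsub hv hvsym hvsub z s)
          (mul_le_mul_of_nonneg_left (norm_iteratedDeriv_mul_conj_comp_sub_le hθ hk z s)
            (pow_nonneg (hw _) n))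
          (by have := hw (-s); positivity) (by have := hv s; have := hv (s - z); positivity)
    _ = _ := by
      rw [Finset.mul_sum, Finset.mul_sum]
      exact Finset.sum_congr rfl fun j _ => by ring

theorem ofReal_mul_lintegral_iteratedDeriv_mul_conj_le (hw : ∀ x, 0 ≤ w x)
    (hwsub : ∀ x y, w (x + y) ≤ C * w x * w y) (hv : ∀ x, 0 ≤ v x) (hvsym : ∀ x, v (-x) = v x)
    (hvsub : ∀ x y, v (x + y) ≤ v x * v y) (n : ℕ) {θ : ℝ → ℂ}
    {N : WithTop ℕ∞} (hθ : ContDiff ℝ N θ) {k : ℕ} (hk : k ≤ N)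
    (ha : ∀ j ≤ k, AEMeasurable
      (fun s => ENNReal.ofReal (v s * w (-s) ^ n * √(w s) * ‖iteratedDeriv j θ s‖)))
    (hb : ∀ j ≤ k, AEMeasurable
      (fun s => ENNReal.ofReal (v s * √(w (-s)) * ‖iteratedDeriv j θ s‖)))
    (z : ℝ) :
    ENNReal.ofReal (√(w z) * v z) *
        ∫⁻ s, ENNReal.ofReal
          (w (-s) ^ n * ‖iteratedDeriv k (fun u => θ u * conj (θ (u - z))) s‖) ≤
      ∑ j ∈ Finset.range (k + 1), ENNReal.ofReal (√C * k.choose j) *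
        ∫⁻ s, ENNReal.ofReal (v s * w (-s) ^ n * √(w s) * ‖iteratedDeriv j θ s‖) *
          ENNReal.ofReal (v (s - z) * √(w (-(s - z))) * ‖iteratedDeriv (k - j) θ (s - z)‖) := by
  have hterm (j : ℕ) (s : ℝ) : ENNReal.ofReal (√C * k.choose j *
      ((v s * w (-s) ^ n * √(w s) * ‖iteratedDeriv j θ s‖) *
        (v (s - z) * √(w (-(s - z))) * ‖iteratedDeriv (k - j) θ (s - z)‖))) =
      ENNReal.ofReal (√C * k.choose j) *
        (ENNReal.ofReal (v s * w (-s) ^ n * √(w s) * ‖iteratedDeriv j θ s‖) *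
          ENNReal.ofReal (v (s - z) * √(w (-(s - z))) * ‖iteratedDeriv (k - j) θ (s - z)‖)) := by
    have := hv s; have := hw (-s)
    rw [ENNReal.ofReal_mul (by positivity)]
    exact congrArg _ (ENNReal.ofReal_mul (by positivity))
  calc _ ≤ ∫⁻ s, ENNReal.ofReal (√(w z) * v z *
          (w (-s) ^ n * ‖iteratedDeriv k (fun u => θ u * conj (θ (u - z))) s‖)) :=
        (lintegral_const_mul_le _ _).trans_eq <| lintegral_congr fun s =>
          (ENNReal.ofReal_mul (mul_nonneg (Real.sqrt_nonneg _) (hv z))).symm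
    _ ≤ ∫⁻ s, ∑ j ∈ Finset.range (k + 1), ENNReal.ofReal (√C * k.choose j *
          ((v s * w (-s) ^ n * √(w s) * ‖iteratedDeriv j θ s‖) *
            (v (s - z) * √(w (-(s - z))) * ‖iteratedDeriv (k - j) θ (s - z)‖))) := by
        refine lintegral_mono fun s => ?_
        rw [← ENNReal.ofReal_sum_of_nonneg fun j _ => by
          have := hv s; have := hw (-s); have := hv (s - z); positivity]
        exact ENNReal.ofReal_le_ofReal
          (sqrt_mul_pow_mul_norm_iteratedDeriv_mul_conj_le hw hwsub hv hvsym hvsub n hθ hk z s)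
    _ = _ := by
        simp_rw [hterm]
        have hshift (j : ℕ) (hj : j ∈ Finset.range (k + 1)) : AEMeasurable (fun s =>
            ENNReal.ofReal (v s * w (-s) ^ n * √(w s) * ‖iteratedDeriv j θ s‖) *
              ENNReal.ofReal (v (s - z) * √(w (-(s - z))) * ‖iteratedDeriv (k - j) θ (s - z)‖)) :=
          (ha j (Finset.mem_range_succ_iff.mp hj)).mul
            ((hb (k - j) (Nat.sub_le k j)).comp_quasiMeasurePreserving
              (measurePreserving_sub_right volume z).quasiMeasurePreserving)
        rw [lintegral_finsetSum' _ fun j hj => (hshift j hj).const_mul _]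
        exact Finset.sum_congr rfl fun j hj => lintegral_const_mul'' _ (hshift j hj)

theorem ofReal_mul_sup_lintegral_iteratedDeriv_mul_conj_le (hw : ∀ x, 0 ≤ w x)
    (hwsub : ∀ x y, w (x + y) ≤ C * w x * w y) (hv : ∀ x, 0 ≤ v x) (hvsym : ∀ x, v (-x) = v x)
    (hvsub : ∀ x y, v (x + y) ≤ v x * v y) (n : ℕ) {θ : ℝ → ℂ}
    {m : ℕ} (hθ : ContDiff ℝ m θ) (t : Finset ℕ) (ht : ∀ k ∈ t, k ≤ m)
    (ha : ∀ j ≤ m, AEMeasurable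
      (fun s => ENNReal.ofReal (v s * w (-s) ^ n * √(w s) * ‖iteratedDeriv j θ s‖)))
    (hb : ∀ j ≤ m, AEMeasurable
      (fun s => ENNReal.ofReal (v s * √(w (-s)) * ‖iteratedDeriv j θ s‖)))
    (z : ℝ) :
    ENNReal.ofReal (√(w z) * v z) * t.sup (fun k =>
        ∫⁻ s, ENNReal.ofReal
          (w (-s) ^ n * ‖iteratedDeriv k (fun u => θ u * conj (θ (u - z))) s‖)) ≤
      ∑ k ∈ t, ∑ j ∈ Finset.range (k + 1), ENNReal.ofReal (√C * k.choose j) *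
        ∫⁻ s, ENNReal.ofReal (v s * w (-s) ^ n * √(w s) * ‖iteratedDeriv j θ s‖) *
          ENNReal.ofReal (v (s - z) * √(w (-(s - z))) * ‖iteratedDeriv (k - j) θ (s - z)‖) := by
  refine (mul_le_mul_right (Finset.sup_le fun k hk =>
    Finset.single_le_sum (fun _ _ => zero_le) hk) _).trans ?_
  rw [Finset.mul_sum]
  exact Finset.sum_le_sum fun k hk =>
    ofReal_mul_lintegral_iteratedDeriv_mul_conj_le hw hwsub hv hvsym hvsub n hθ
      (by exact_mod_cast ht k hk) (fun j hj => ha j (hj.trans (ht k hk)))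
      (fun j hj => hb j (hj.trans (ht k hk))) z

end Weights

theorem integrable_oscillation_bound_general
    (W : Warping)
    (C : ℝ) (hwsub : ∀ x y : ℝ, W.w (x + y) ≤ C * W.w x * W.w y)
    (v : ℝ → ℝ) (hvpos : ∀ x, 0 < v x) (hvsym : ∀ x, v (-x) = v x)
    (hvsub : ∀ x y, v (x + y) ≤ v x * v y)
    (n : ℕ) (r : ℝ) (hr : 0 < r)
    (θ : ℝ → ℂ) (hθ : ContDiff ℝ (n + 1) θ)
    (hθ₁ : ∀ k ≤ n + 1, MemLp
      (fun s : ℝ => (v s * W.w (-s) ^ n * Real.sqrt (W.w s) * (1 + |s|) ^ (1 + r)) •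
        iteratedDeriv k θ s) 2 volume)
    (hθ₂ : ∀ k ≤ n + 1, MemLp
      (fun s : ℝ => (v s * Real.sqrt (W.w (-s)) * (1 + |s|) ^ (1 + r)) •
        iteratedDeriv k θ s) 2 volume) :
    (∫⁻ z : ℝ, ENNReal.ofReal (Real.sqrt (W.w z) * v z) *
        (Finset.Icc 1 (n + 1)).sup (fun k =>
          ∫⁻ s : ℝ, ENNReal.ofReal (W.w (-s) ^ n *
            ‖iteratedDeriv k (fun u : ℝ => θ u * (starRingEnd ℂ) (θ (u - z))) s‖))) < ⊤ := by
  have hw (x : ℝ) : 0 ≤ W.w x := (W.w_pos x).le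
  have hv (x : ℝ) : 0 ≤ v x := (hvpos x).le
  have hp : 1 < 2 * (1 + r) := by linarith
  have ha (j : ℕ) (hj : j ≤ n + 1) : Integrable
      (fun s => v s * W.w (-s) ^ n * √(W.w s) * ‖iteratedDeriv j θ s‖) :=
    integrable_mul_norm_of_memLp_two_mul_one_add_abs_rpow hp
      (fun s => by have := hv s; have := hw (-s); positivity) (hθ₁ j hj)
  have hb (j : ℕ) (hj : j ≤ n + 1) : Integrable
      (fun s => v s * √(W.w (-s)) * ‖iteratedDeriv j θ s‖) :=
    integrable_mul_norm_of_memLp_two_mul_one_add_abs_rpow hp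
      (fun s => by have := hv s; positivity) (hθ₂ j hj)
  set a : ℕ → ℝ → ℝ≥0∞ := fun j s =>
    ENNReal.ofReal (v s * W.w (-s) ^ n * √(W.w s) * ‖iteratedDeriv j θ s‖)
  set b : ℕ → ℝ → ℝ≥0∞ := fun j s => ENNReal.ofReal (v s * √(W.w (-s)) * ‖iteratedDeriv j θ s‖)
  -- `v` need not be measurable: measurability of `a j` and `b j` comes from `hθ₁` and `hθ₂`.
  have haM (j : ℕ) (hj : j ≤ n + 1) : AEMeasurable (a j) := (ha j hj).aemeasurable.ennreal_ofReal
  have hbM (j : ℕ) (hj : j ≤ n + 1) : AEMeasurable (b j) := (hb j hj).aemeasurable.ennreal_ofReal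
  have hIcc (k : ℕ) (hk : k ∈ Finset.Icc 1 (n + 1)) : k ≤ n + 1 := (Finset.mem_Icc.mp hk).2
  calc _ ≤ ∫⁻ z, ∑ k ∈ Finset.Icc 1 (n + 1), ∑ j ∈ Finset.range (k + 1),
          ENNReal.ofReal (√C * k.choose j) * ∫⁻ s, a j s * b (k - j) (s - z) :=
        lintegral_mono fun z => ofReal_mul_sup_lintegral_iteratedDeriv_mul_conj_le
          hw hwsub hv hvsym hvsub n (m := n + 1) (by exact_mod_cast hθ) _ hIcc haM hbM z
    _ < ∞ := lintegral_sum_sum_mul_lintegral_mul_comp_sub_lt_top _ hIcc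
        (fun _ _ => ENNReal.ofReal_ne_top) haM hbM
        (fun j hj => (ha j hj).lintegral_lt_top.ne) (fun j hj => (hb j hj).lintegral_lt_top.ne)

/-- Let `F : D → ℝ` be a warping function such that `w = (F⁻¹)'` is
continuous and satisfies `w(x+y) ≤ C w(x) w(y)`, let `v` be a symmetric submultiplicative
weight, `n ∈ ℕ₀`, `r > 0`, and set `w₁(s) = v(s) w(−s)ⁿ √(w(s)) (1+|s|)^{1+r}`,
`w₂(s) = v(s) √(w(−s)) (1+|s|)^{1+r}`.  If `θ ∈ C^{n+1}(ℝ)` satisfies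
`θ^{(k)} ∈ L²_{w₁}(ℝ) ∩ L²_{w₂}(ℝ)` for all `0 ≤ k ≤ n+1`, then
`∫ √(w(z)) v(z) c_n(z) dz < ∞`, where
`c_n(z) = max_{1≤k≤n+1} ∫ w(−s)ⁿ |(θ · conj θ(·−z))^{(k)}(s)| ds`. -/
theorem integrable_oscillation_bound
    (W : Warping) (hwc : Continuous W.w)
    (C : ℝ) (hwsub : ∀ x y : ℝ, W.w (x + y) ≤ C * W.w x * W.w y)
    (v : ℝ → ℝ) (hvpos : ∀ x, 0 < v x) (hvsym : ∀ x, v (-x) = v x)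
    (hvsub : ∀ x y, v (x + y) ≤ v x * v y)
    (n : ℕ) (r : ℝ) (hr : 0 < r)
    (θ : ℝ → ℂ) (hθ : ContDiff ℝ (n + 1) θ)
    (hθ₁ : ∀ k ≤ n + 1, MemLp
      (fun s : ℝ => (v s * W.w (-s) ^ n * Real.sqrt (W.w s) * (1 + |s|) ^ (1 + r)) •
        iteratedDeriv k θ s) 2 volume)
    (hθ₂ : ∀ k ≤ n + 1, MemLp
      (fun s : ℝ => (v s * Real.sqrt (W.w (-s)) * (1 + |s|) ^ (1 + r)) •
        iteratedDeriv k θ s) 2 volume) :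
    (∫⁻ z : ℝ, ENNReal.ofReal (Real.sqrt (W.w z) * v z) *
        (Finset.Icc 1 (n + 1)).sup (fun k =>
          ∫⁻ s : ℝ, ENNReal.ofReal (W.w (-s) ^ n *
            ‖iteratedDeriv k (fun u : ℝ => θ u * (starRingEnd ℂ) (θ (u - z))) s‖))) < ⊤ :=
  integrable_oscillation_bound_general W C hwsub v hvpos hvsym hvsub n r hr θ hθ hθ₁ hθ₂
end
end

section
/- Let F : D → ℝ be a warping function whose weight w = (F⁻¹)′ satisfies w(x+y) ≤ C·w(x)·w(y) for all x,y ∈ ℝ, with C ≥ 1. Then for every δ > 0, every (y,ω) ∈ D×ℝ and every (l,k) ∈ ℤ² with (y,ω) ∈ U^δ_{l,k}, one has U^δ_{l,k} ⊆ [F⁻¹(F(y)−δ), F⁻¹(F(y)+δ)] × [ω − C·δ·w(δ)/w(F(y)), ω + C·δ·w(δ)/w(F(y))]. Consequently Q_{y,ω} is contained in this product of intervals. -/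
open MeasureTheory Filter Topology Set
open scoped ENNReal NNReal

noncomputable section

/-- The length of the interval `I^δ_{F,l} = [F⁻¹(δl), F⁻¹(δ(l+1))]`. -/
def Ilen (W : Warping) (δ : ℝ) (l : ℤ) : ℝ := W.Finv (δ * (l + 1)) - W.Finv (δ * l)

/-- The `F`-induced `δ`-cover: `U^δ_{l,k} = I^δ_{F,l} × [δ²k/|I^δ_{F,l}|, δ²(k+1)/|I^δ_{F,l}|]`
with `I^δ_{F,l} = [F⁻¹(δl), F⁻¹(δ(l+1))]`. -/
def Ucover (W : Warping) (δ : ℝ) (l k : ℤ) : Set (ℝ × ℝ) :=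
  Set.Icc (W.Finv (δ * l)) (W.Finv (δ * (l + 1))) ×ˢ
    Set.Icc (δ ^ 2 * k / Ilen W δ l) (δ ^ 2 * (k + 1) / Ilen W δ l)

/-- `Q_{y,ω}`: the union of all covering sets `U^δ_{l,k}` containing `(y,ω)`. -/
def Qset (W : Warping) (δ y ω : ℝ) : Set (ℝ × ℝ) :=
  ⋃ (l : ℤ) (k : ℤ) (_ : (y, ω) ∈ Ucover W δ l k), Ucover W δ l k

/-- Let `F : D → ℝ` be a warping function whose weight `w = (F⁻¹)'` satisfies
`w(x+y) ≤ C w(x) w(y)` with `C ≥ 1`.  Then for every `δ > 0`, every `(y,ω) ∈ D×ℝ` and every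
`(l,k) ∈ ℤ²` with `(y,ω) ∈ U^δ_{l,k}`, the set `U^δ_{l,k}` is contained in
`[F⁻¹(F(y)−δ), F⁻¹(F(y)+δ)] × [ω − Cδw(δ)/w(F(y)), ω + Cδw(δ)/w(F(y))]`; consequently the
same holds for `Q_{y,ω}`. -/
theorem Ucover_subset_of_mem
    (W : Warping) (C : ℝ) (hC : 1 ≤ C)
    (hwsub : ∀ x y : ℝ, W.w (x + y) ≤ C * W.w x * W.w y)
    (δ : ℝ) (hδ : 0 < δ) (y : ℝ) (hy : y ∈ W.D) (ω : ℝ) :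
    (∀ l k : ℤ, (y, ω) ∈ Ucover W δ l k →
      Ucover W δ l k ⊆
        Set.Icc (W.Finv (W.F y - δ)) (W.Finv (W.F y + δ)) ×ˢ
          Set.Icc (ω - C * δ * W.w δ / W.w (W.F y)) (ω + C * δ * W.w δ / W.w (W.F y))) ∧
    Qset W δ y ω ⊆
      Set.Icc (W.Finv (W.F y - δ)) (W.Finv (W.F y + δ)) ×ˢ
        Set.Icc (ω - C * δ * W.w δ / W.w (W.F y)) (ω + C * δ * W.w δ / W.w (W.F y)) := by
  have hdiff : ∀ s, HasDerivAt W.Finv (W.w s) s := W.w_hasDeriv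
  have hFinv_mono : StrictMono W.Finv := by
    apply strictMono_of_deriv_pos
    intro s
    rw [(hdiff s).deriv]
    exact W.w_pos s
  -- w s = 1 / F'(Finv s)
  have hwF' : ∀ s : ℝ, W.F' (W.Finv s) * W.w s = 1 := by
    intro s
    have h1 : HasDerivAt (W.F ∘ W.Finv) (W.F' (W.Finv s) * W.w s) s :=
      (W.F_hasDeriv _ (W.mem_inv s)).comp s (hdiff s)
    have h2 : W.F ∘ W.Finv = fun t => t := funext fun t => W.right_inv t
    rw [h2] at h1
    exact h1.unique (hasDerivAt_id s)
  have hw_eq : ∀ s, W.w s = 1 / W.F' (W.Finv s) :=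
    fun s => eq_one_div_of_mul_eq_one_right (hwF' s)
  have hw_abs : ∀ a b : ℝ, |W.Finv a| < |W.Finv b| → W.w a ≤ W.w b := by
    intro a b h
    have hb := W.F'_pos _ (W.mem_inv b)
    have hdec := W.F'_dec _ (W.mem_inv a) _ (W.mem_inv b) h
    rw [hw_eq a, hw_eq b]
    exact le_of_lt (one_div_lt_one_div_of_lt hb hdec)
  have hw_lt : ∀ d : ℝ, |d| < δ → W.w d ≤ W.w δ := by
    intro d hd
    rcases W.hD with hDu | hDi
    · have hFinv_odd : ∀ s, W.Finv (-s) = -W.Finv s := by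
        intro s
        have h1 : W.F (-(W.Finv s)) = -s := by
          rw [W.odd_of_univ hDu, W.right_inv]
        have h2 := W.left_inv (-(W.Finv s)) (by rw [hDu]; trivial)
        rw [h1] at h2
        exact h2
      rw [abs_lt] at hd
      apply hw_abs
      rw [abs_lt]
      constructor
      · have h1 : W.Finv (-δ) < W.Finv d := hFinv_mono hd.1
        rw [hFinv_odd] at h1
        exact lt_of_le_of_lt (neg_le_neg (le_abs_self _)) h1
      · exact lt_of_lt_of_le (hFinv_mono hd.2) (le_abs_self _)
    · have hdδ : d < δ := lt_of_abs_lt hd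
      apply hw_abs
      have h1 : (0:ℝ) < W.Finv d := by have := W.mem_inv d; rwa [hDi, Set.mem_Ioi] at this
      have h2 : (0:ℝ) < W.Finv δ := by have := W.mem_inv δ; rwa [hDi, Set.mem_Ioi] at this
      rw [abs_of_pos h1, abs_of_pos h2]
      exact hFinv_mono hdδ
  have key : ∀ l k : ℤ, (y, ω) ∈ Ucover W δ l k →
      Ucover W δ l k ⊆
        Set.Icc (W.Finv (W.F y - δ)) (W.Finv (W.F y + δ)) ×ˢ
          Set.Icc (ω - C * δ * W.w δ / W.w (W.F y)) (ω + C * δ * W.w δ / W.w (W.F y)) := by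
    intro l k hmem
    obtain ⟨⟨hy1, hy2⟩, hω1, hω2⟩ := hmem
    have hyF : W.Finv (W.F y) = y := W.left_inv y hy
    have hFy1 : δ * l ≤ W.F y := by
      apply hFinv_mono.le_iff_le.mp
      rw [hyF]; exact hy1
    have hFy2 : W.F y ≤ δ * ((l:ℝ) + 1) := by
      apply hFinv_mono.le_iff_le.mp
      rw [hyF]; exact hy2
    have hab : δ * (l:ℝ) < δ * ((l:ℝ) + 1) := by nlinarith
    obtain ⟨c, hcmem, hc⟩ := exists_hasDerivAt_eq_slope W.Finv W.w hab
      (fun s _ => (hdiff s).continuousAt.continuousWithinAt)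
      (fun s _ => hdiff s)
    have hstep : δ * ((l:ℝ) + 1) - δ * (l:ℝ) = δ := by ring
    have hIlen : Ilen W δ l = W.w c * δ := by
      unfold Ilen
      rw [hc, hstep]
      field_simp
    have hL : 0 < Ilen W δ l := by rw [hIlen]; exact mul_pos (W.w_pos c) hδ
    obtain ⟨hc1, hc2⟩ := hcmem
    have hd : |W.F y - c| < δ := by
      rw [abs_lt]
      constructor <;> nlinarith
    have hsub : W.w (W.F y) ≤ C * W.w δ * W.w c := by
      have h1 := hwsub (W.F y - c) c
      rw [sub_add_cancel] at h1
      have h2 := hw_lt (W.F y - c) hd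
      have hwc := W.w_pos c
      have h3 : C * W.w (W.F y - c) * W.w c ≤ C * W.w δ * W.w c :=
        mul_le_mul_of_nonneg_right
          (mul_le_mul_of_nonneg_left h2 (by linarith : (0:ℝ) ≤ C)) hwc.le
      linarith
    have hwidth : δ ^ 2 * ((k:ℝ) + 1) / Ilen W δ l - δ ^ 2 * (k:ℝ) / Ilen W δ l
        = δ ^ 2 / Ilen W δ l := by
      field_simp
      ring
    have hbound : δ ^ 2 / Ilen W δ l ≤ C * δ * W.w δ / W.w (W.F y) := by
      rw [hIlen, div_le_div_iff₀ (mul_pos (W.w_pos c) hδ) (W.w_pos _)]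
      have h3 : δ ^ 2 * W.w (W.F y) ≤ δ ^ 2 * (C * W.w δ * W.w c) :=
        mul_le_mul_of_nonneg_left hsub (sq_nonneg δ)
      nlinarith [h3]
    rintro ⟨t, s⟩ ⟨⟨ht1, ht2⟩, hs1, hs2⟩
    refine ⟨⟨?_, ?_⟩, ?_, ?_⟩
    · refine le_trans (hFinv_mono.monotone ?_) ht1
      nlinarith
    · refine le_trans ht2 (hFinv_mono.monotone ?_)
      nlinarith
    · have h4 : δ ^ 2 * (k:ℝ) / Ilen W δ l ≤ s := hs1
      have h5 : ω ≤ δ ^ 2 * ((k:ℝ) + 1) / Ilen W δ l := hω2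
      linarith
    · have h4 : s ≤ δ ^ 2 * ((k:ℝ) + 1) / Ilen W δ l := hs2
      have h5 : δ ^ 2 * (k:ℝ) / Ilen W δ l ≤ ω := hω1
      linarith
  refine ⟨key, ?_⟩
  intro p hp
  simp only [Qset, Set.mem_iUnion] at hp
  obtain ⟨l, k, hm, hp⟩ := hp
  exact key l k hm hp
end
end
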